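/- Let R be an integral domain of Krull dimension 1. Then every parameter sequence on R has length exactly 1 and consists of a nonzero nonunit, hence is a regular sequence; therefore R is Cohen-Macaulay. -/

import Mathlib

/-- The natural map between localizations of a module at powers of two elements
`a ∣ b`, sending `m/1` to `m/1`. -/

noncomputable def cechLoc {R : Type*} [CommRing R] {M : Type*} [AddCommGroup M] [Module R M]
    (a b : R) (hab : a ∣ b) :
    LocalizedModule (Submonoid.powers a) M →ₗ[R] LocalizedModule (Submonoid.powers b) M :=
  LocalizedModule.lift _ (LocalizedModule.mkLinearMap (Submonoid.powers b) M) (by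
    rintro ⟨s, n, rfl⟩
    obtain ⟨c, rfl⟩ := hab
    set f := algebraMap R (Module.End R (LocalizedModule (Submonoid.powers (a * c)) M)) with hf
    obtain ⟨u, hu⟩ := IsLocalizedModule.map_units
      (LocalizedModule.mkLinearMap (Submonoid.powers (a * c)) M)
      (⟨(a * c) ^ n, n, rfl⟩ : Submonoid.powers (a * c))
    have hcomm : Commute (f (a ^ n)) ↑u := by
      have : Commute (f (a ^ n)) (f ((a * c) ^ n)) := by
        simp only [Commute, SemiconjBy, ← map_mul, mul_comm]
      rwa [← hu] at this
    refine ⟨⟨f (a ^ n), f (c ^ n) * ↑u⁻¹, ?_, ?_⟩, rfl⟩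
    · rw [← mul_assoc, ← map_mul, ← mul_pow, ← hu]
      exact u.mul_inv
    · rw [mul_assoc, ← (hcomm.units_inv_right).eq, ← mul_assoc, ← map_mul]
      have : c ^ n * a ^ n = (a * c) ^ n := by ring
      rw [this, ← hu]
      exact u.mul_inv)

open scoped BigOperators
open Classical

noncomputable section

universe u
variable {R : Type u} [CommRing R]

/-- Degree `i` term of the Čech complex of the sequence `x` with coefficients in `M`:
the product over `i`-element subsets `t` of the index set of the localization of `M`
at the product of the `x j` for `j ∈ t`. -/
noncomputable abbrev CechC {ℓ : ℕ} (x : Fin ℓ → R) (M : Type*) [AddCommGroup M] [Module R M]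
    (i : ℕ) : Type _ :=
  ∀ t : {t : Finset (Fin ℓ) // t.card = i}, LocalizedModule (Submonoid.powers (∏ j ∈ t.1, x j)) M

/-- The Čech differential `C^i → C^{i+1}`: the alternating sum of the further-localization
maps. -/
noncomputable def cechD {ℓ : ℕ} (x : Fin ℓ → R) (M : Type*) [AddCommGroup M] [Module R M]
    (i : ℕ) : CechC x M i →ₗ[R] CechC x M (i + 1) where
  toFun m t := ∑ j ∈ (t.1).attach,
    ((-1 : ℤ) ^ ((t.1.filter (· < j.1)).card)) •
      cechLoc (∏ k ∈ t.1.erase j.1, x k) (∏ k ∈ t.1, x k)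
        (Finset.prod_dvd_prod_of_subset _ _ _ (Finset.erase_subset _ _))
        (m ⟨t.1.erase j.1, by rw [Finset.card_erase_of_mem j.2, t.2]; omega⟩)
  map_add' := by
    intro a b
    funext t
    simp [Pi.add_apply, map_add, smul_add, Finset.sum_add_distrib]
    rw [← Finset.sum_add_distrib]
    exact Finset.sum_congr rfl (fun j _ => by first | exact zsmul_add _ _ _ | rw [zsmul_add] | exact (smul_add _ _ _ :))
  map_smul' := by
    intro r a
    funext t
    simp [Pi.smul_apply, map_smul, Finset.smul_sum, smul_comm r]

/-- The submodule of Čech coboundaries in degree `i`. -/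
noncomputable def cechPrevRange {ℓ : ℕ} (x : Fin ℓ → R) (M : Type*) [AddCommGroup M]
    [Module R M] : (i : ℕ) → Submodule R (CechC x M i)
  | 0 => ⊥
  | (i + 1) => LinearMap.range (cechD x M i)

/-- The `i`-th Čech cohomology of `M` with respect to the sequence `x`:
cocycles modulo coboundaries. -/
noncomputable abbrev CechH {ℓ : ℕ} (x : Fin ℓ → R) (M : Type*) [AddCommGroup M] [Module R M]
    (i : ℕ) : Type _ :=
  LinearMap.ker (cechD x M i) ⧸
    (cechPrevRange x M i).comap (LinearMap.ker (cechD x M i)).subtype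


/-- Degree `i` term of the Koszul complex on `ℓ` elements: free module indexed by
`i`-element subsets of the index set. -/
abbrev KoszulC (R : Type*) [CommRing R] (ℓ i : ℕ) : Type _ :=
  {t : Finset (Fin ℓ) // t.card = i} → R

/-- The Koszul differential `K_{i+1} → K_i` for the sequence `x^k = x_1^k, ..., x_ℓ^k`. -/
noncomputable def koszulD {ℓ : ℕ} (x : Fin ℓ → R) (k : ℕ) (i : ℕ) :
    KoszulC R ℓ (i + 1) →ₗ[R] KoszulC R ℓ i where
  toFun m s := ∑ j ∈ (s.1ᶜ).attach,
    ((-1 : ℤ) ^ ((s.1.filter (· < j.1)).card)) •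
      ((x j.1 ^ k) * m ⟨insert j.1 s.1, by
        rw [Finset.card_insert_of_notMem (Finset.mem_compl.mp j.2), s.2]⟩)
  map_add' := by
    intro a b
    funext s
    simp [mul_add, smul_add, Finset.sum_add_distrib]
  map_smul' := by
    intro r a
    funext s
    simp [Finset.mul_sum, mul_smul_comm, mul_left_comm]
  
/-- The standard transition chain map `K(x^m) → K(x^n)` (for `n ≤ m`) in degree `i`:
multiplication on the component indexed by `t` by `∏_{j ∈ t} x_j^{m-n}`. -/
noncomputable def koszulTr {ℓ : ℕ} (x : Fin ℓ → R) (m n i : ℕ) :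
    KoszulC R ℓ i →ₗ[R] KoszulC R ℓ i where
  toFun z t := (∏ j ∈ t.1, x j ^ (m - n)) * z t
  map_add' := by intro a b; funext t; simp [mul_add]
  map_smul' := by intro r a; funext t; simp; ring

/-- A finite sequence `x` is weakly proregular if for each `n` there is `m ≥ n` such that
the transition maps `H_i(x^m; R) → H_i(x^n; R)` on Koszul homology vanish for all `i ≥ 1`;
equivalently, the transition image of every cycle is a boundary. -/
def WeaklyProregular {ℓ : ℕ} (x : Fin ℓ → R) : Prop :=
  ∀ n : ℕ, 1 ≤ n → ∃ m, n ≤ m ∧ ∀ i : ℕ, ∀ z : KoszulC R ℓ (i + 1),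
    koszulD x m i z = 0 →
      ∃ b : KoszulC R ℓ (i + 1 + 1), koszulD x n (i + 1) b = koszulTr x m n (i + 1) z

/-- The height of an ideal: the infimum of the heights of the primes containing it. -/
noncomputable def idealHeight (I : Ideal R) : ℕ∞ :=
  ⨅ p : {p : PrimeSpectrum R // I ≤ p.asIdeal}, Order.height p.1


/-- A finite sequence `x` (given as a list `l`) is a parameter sequence on `R` if it is
weakly proregular, generates a proper ideal, and the localized top Čech cohomology
`H^{ℓ(x)}_x(R)_p` is nonzero for every prime `p` containing `(x)R`. -/
def IsParamSeq (l : List R) : Prop :=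
  WeaklyProregular l.get ∧ Ideal.span {a | a ∈ l} ≠ ⊤ ∧
    ∀ p : PrimeSpectrum R, Ideal.span {a | a ∈ l} ≤ p.asIdeal →
      Nontrivial (LocalizedModule p.asIdeal.primeCompl (CechH l.get R l.length))

/-- A strong parameter sequence: every initial segment is a parameter sequence. -/
def IsStrongParamSeq (l : List R) : Prop :=
  ∀ i : ℕ, i ≤ l.length → IsParamSeq (l.take i)


/-- `PossiblyImproperRegular R l N`: the list `l` is a possibly improper regular sequence on
the `R`-module `N`. -/
def PossiblyImproperRegular (R : Type u) [CommRing R] :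
    List R → (N : Type u) → [inst : AddCommGroup N] → [inst2 : Module R N] → Prop
  | [], _, _, _ => True
  | a :: as, N, _, _ => (∀ m : N, a • m = 0 → m = 0) ∧
      PossiblyImproperRegular R as (N ⧸ (Ideal.span {a} • (⊤ : Submodule R N)))

variable (R) in
/-- The list `l` is a regular sequence on the ring `R`. -/
def IsRegularSeq (l : List R) : Prop :=
  PossiblyImproperRegular R l R ∧ Ideal.span {a | a ∈ l} ≠ ⊤

/-!
In top degree the Čech complex of `x₀, …, x_{ℓ-1}` is the single module `M_X`, `X = ∏ xᵢ`, so
`H^ℓ_x(M)` is `M_X` modulo the images of the faces `M_{X/xᵢ}`. A zero entry makes `M_X` vanish.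
If `x₀ ≠ 0` and `x₁ ∈ p` in a one-dimensional domain, then `s x₁^t ∈ (x₀^n)` for some `s ∉ p`:
otherwise a prime `q ⊇ (x₀^n)` avoiding `x₁` and `R ∖ p` would give a chain `0 ⊊ q ⊊ p`.
With `s x₁^t = c x₀^n`, the class `s • r / X^n` is the image of a fraction on the face omitting
`x₀`, so `H^ℓ_x(R)_p = 0` as soon as `ℓ ≥ 2`. Hence a parameter sequence is a single nonzero
nonunit, which is a regular sequence in a domain.
-/

theorem exists_mul_pow_mem_of_ne_bot [NoZeroDivisors R] [Ring.KrullDimLE 1 R] {I : Ideal R}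
    (hI : I ≠ ⊥) {p : Ideal R} [hp : p.IsPrime] {y : R} (hy : y ∈ p) :
    ∃ s ∉ p, ∃ t : ℕ, s * y ^ t ∈ I := by
  by_contra! h
  have hdisj : Disjoint (I : Set R) (p.primeCompl ⊔ Submonoid.powers y : Submonoid R) := by
    refine Set.disjoint_right.mpr fun r hr hrI => ?_
    obtain ⟨s, hs, _, ⟨t, rfl⟩, rfl⟩ := Submonoid.mem_sup.mp hr
    exact h s hs t hrI
  obtain ⟨q, hq, hIq, hqdisj⟩ := Ideal.exists_le_prime_disjoint I _ hdisj
  have hqp : q ≤ p := fun r hrq => by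
    by_contra hrp
    exact Set.disjoint_left.mp hqdisj hrq (Submonoid.mem_sup_left (show r ∈ p.primeCompl from hrp))
  have hqmax : q.IsMaximal := hq.isMaximal_of_ne_bot (ne_bot_of_le_ne_bot hI hIq)
  have hyq : y ∈ q := (hqmax.eq_of_le hp.ne_top hqp).symm ▸ hy
  exact Set.disjoint_left.mp hqdisj hyq (Submonoid.mem_sup_right (Submonoid.mem_powers y))

section

variable {M : Type*} [AddCommGroup M] [Module R M]

theorem cechLoc_mk_pow {a b : R} (hab : a ∣ b) {c : R} (hb : a * c = b) (m : M) (K : ℕ) :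
    cechLoc a b hab (LocalizedModule.mk m ⟨a ^ K, pow_mem (Submonoid.mem_powers a) K⟩) =
      LocalizedModule.mk (c ^ K • m) ⟨b ^ K, pow_mem (Submonoid.mem_powers b) K⟩ := by
  rw [cechLoc, LocalizedModule.lift_mk, LocalizedModule.mkLinearMap_apply,
    ← Module.End.smul_def, ← Units.smul_def, inv_smul_eq_iff, Units.smul_def, IsUnit.unit_spec,
    Module.End.smul_def, Module.algebraMap_end_apply, LocalizedModule.smul'_mk,
    LocalizedModule.mk_eq]
  refine ⟨1, ?_⟩
  simp only [one_smul, Submonoid.smul_def, smul_smul, ← hb, mul_pow]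

theorem cechD_single_erase_apply {ℓ i : ℕ} (x : Fin ℓ → R)
    (t : {t : Finset (Fin ℓ) // t.card = i + 1}) {j : Fin ℓ} (hj : j ∈ t.1)
    (m : LocalizedModule (Submonoid.powers (∏ k ∈ t.1.erase j, x k)) M) :
    cechD x M i (Pi.single ⟨t.1.erase j, by rw [Finset.card_erase_of_mem hj, t.2]; rfl⟩ m) t =
      (-1 : ℤ) ^ (t.1.filter (· < j)).card •
        cechLoc _ _ (Finset.prod_dvd_prod_of_subset _ _ _ (Finset.erase_subset _ _)) m := by
  simp only [cechD, LinearMap.coe_mk, AddHom.coe_mk]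
  rw [Finset.sum_eq_single_of_mem ⟨j, hj⟩ (Finset.mem_attach _ _)]
  · rw [Pi.single_eq_same]
  · rintro ⟨j', hj'⟩ - hne
    have hface : t.1.erase j' ≠ t.1.erase j := fun h =>
      Finset.notMem_erase j t.1 (h ▸ Finset.mem_erase.mpr ⟨fun e => hne (Subtype.ext e.symm), hj⟩)
    rw [Pi.single_eq_of_ne (fun h => hface (congrArg Subtype.val h)), map_zero, zsmul_zero]

theorem subsingleton_cechH_top_of_eq_zero {ℓ : ℕ} (x : Fin ℓ → R) {j : Fin ℓ} (hj : x j = 0) :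
    Subsingleton (CechH x M ℓ) := by
  have : ∀ t : {t : Finset (Fin ℓ) // t.card = ℓ},
      Subsingleton (LocalizedModule (Submonoid.powers (∏ k ∈ t.1, x k)) M) := fun t => by
    have h0 : ∏ k ∈ t.1, x k = 0 := by
      rw [Finset.eq_univ_of_card t.1 (t.2.trans (Fintype.card_fin ℓ).symm)]
      exact Finset.prod_eq_zero (Finset.mem_univ j) hj
    exact LocalizedModule.subsingleton (by rw [h0]; exact Submonoid.mem_powers 0)
  have : Subsingleton (LinearMap.ker (cechD x M ℓ)) :=
    ⟨fun a b => Subtype.ext (funext fun t => Subsingleton.elim _ _)⟩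
  exact (Submodule.Quotient.mk_surjective _).subsingleton

theorem exists_smul_eq_zero_cechH_top {k : ℕ} (x : Fin (k + 2) → R) (S : Submonoid R)
    (hS : ∀ n : ℕ, ∃ s ∈ S, ∃ t : ℕ, s * x 1 ^ t ∈ Ideal.span {x 0 ^ n})
    (η : CechH x M (k + 2)) : ∃ s ∈ S, s • η = 0 := by
  obtain ⟨z, rfl⟩ := Submodule.Quotient.mk_surjective _ η
  have huniv : (Finset.univ : Finset (Fin (k + 2))).card = k + 2 := by simp
  obtain ⟨r, n, hz⟩ : ∃ (r : M) (n : ℕ), z.1 ⟨Finset.univ, huniv⟩ =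
      LocalizedModule.mk r ⟨(∏ k, x k) ^ n, pow_mem (Submonoid.mem_powers _) n⟩ := by
    induction z.1 ⟨Finset.univ, huniv⟩ using LocalizedModule.induction_on with
    | h r σ => obtain ⟨_, n, rfl⟩ := σ; exact ⟨r, n, rfl⟩
  obtain ⟨s, hs, t, hst⟩ := hS n
  obtain ⟨c, hc⟩ := Ideal.mem_span_singleton'.mp hst
  set w₀ := ∏ k ∈ Finset.univ.erase (0 : Fin (k + 2)), x k
  have hX : w₀ * x 0 = ∏ k, x k := by
    rw [mul_comm]; exact Finset.mul_prod_erase _ _ (Finset.mem_univ 0)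
  obtain ⟨w₁, hw₁⟩ : x 1 ∣ w₀ :=
    Finset.dvd_prod_of_mem _ (Finset.mem_erase.mpr ⟨one_ne_zero, Finset.mem_univ 1⟩)
  refine ⟨s, hs, ?_⟩
  rw [← Submodule.Quotient.mk_smul, Submodule.Quotient.mk_eq_zero]
  show (s • z).1 ∈ LinearMap.range (cechD x M (k + 1))
  -- `s • r / X^n = c w₁^t r / w₀^(n+t)` in `M_X`, as `X = x₁ w₁ x₀` and `s x₁^t = c x₀^n`.
  refine ⟨Pi.single ⟨Finset.univ.erase 0, by simp⟩
    (LocalizedModule.mk ((c * w₁ ^ t) • r) ⟨w₀ ^ (n + t), pow_mem (Submonoid.mem_powers _) _⟩), ?_⟩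
  funext T
  obtain rfl : T = ⟨Finset.univ, huniv⟩ :=
    Subtype.ext (Finset.eq_univ_of_card _ (T.2.trans (Fintype.card_fin _).symm))
  rw [cechD_single_erase_apply x ⟨Finset.univ, huniv⟩ (Finset.mem_univ 0)]
  have hsign : (Finset.univ.filter (· < (0 : Fin (k + 2)))).card = 0 := by simp
  rw [hsign, pow_zero, one_smul, cechLoc_mk_pow _ hX, Submodule.coe_smul, Pi.smul_apply, hz,
    LocalizedModule.smul'_mk, LocalizedModule.mk_eq]
  refine ⟨1, ?_⟩
  simp only [one_smul, Submonoid.smul_def, smul_smul]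
  congr 1
  rw [← hX, hw₁]
  linear_combination (x 1 * w₁ * x 0) ^ n * x 0 ^ t * w₁ ^ t * hc

theorem subsingleton_localizedModule_cechH_top [NoZeroDivisors R] [Ring.KrullDimLE 1 R]
    {ℓ : ℕ} (hℓ : 2 ≤ ℓ) (x : Fin ℓ → R) (p : Ideal R) [p.IsPrime] (hx : ∀ j, x j ∈ p) :
    Subsingleton (LocalizedModule p.primeCompl (CechH x M ℓ)) := by
  obtain ⟨k, rfl⟩ : ∃ k, ℓ = k + 2 := ⟨ℓ - 2, by omega⟩
  by_cases hx₀ : x 0 = 0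
  · have := subsingleton_cechH_top_of_eq_zero (M := M) x hx₀
    infer_instance
  refine LocalizedModule.subsingleton_iff.mpr (exists_smul_eq_zero_cechH_top x _ fun n => ?_)
  exact exists_mul_pow_mem_of_ne_bot (by simpa using pow_ne_zero n hx₀) (hx 1)

end

theorem IsParamSeq.exists_nontrivial {l : List R} (hl : IsParamSeq l) :
    ∃ p : PrimeSpectrum R, (∀ a ∈ l, a ∈ p.asIdeal) ∧
      Nontrivial (LocalizedModule p.asIdeal.primeCompl (CechH l.get R l.length)) := by
  obtain ⟨p, hp, hlp⟩ := Ideal.exists_le_maximal _ hl.2.1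
  exact ⟨⟨p, hp.isPrime⟩, fun a ha => hlp (Ideal.subset_span ha), hl.2.2 ⟨p, hp.isPrime⟩ hlp⟩

theorem IsParamSeq.ne_zero {l : List R} (hl : IsParamSeq l) {a : R} (ha : a ∈ l) : a ≠ 0 := by
  rintro rfl
  obtain ⟨j, hj⟩ := List.get_of_mem ha
  obtain ⟨p, -, hp⟩ := hl.exists_nontrivial
  have := subsingleton_cechH_top_of_eq_zero (M := R) l.get hj
  exact not_nontrivial _ hp

theorem IsParamSeq.not_isUnit {l : List R} (hl : IsParamSeq l) {a : R} (ha : a ∈ l) :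
    ¬IsUnit a := fun hu => hl.2.1 (Ideal.eq_top_of_isUnit_mem _ (Ideal.subset_span ha) hu)

theorem IsParamSeq.length_le_one [NoZeroDivisors R] [Ring.KrullDimLE 1 R] {l : List R}
    (hl : IsParamSeq l) : l.length ≤ 1 := by
  by_contra! h
  obtain ⟨p, hlp, hp⟩ := hl.exists_nontrivial
  have := subsingleton_localizedModule_cechH_top (M := R) h l.get p.asIdeal
    fun j => hlp _ (List.get_mem l j)
  exact not_nontrivial _ hp

theorem IsParamSeq.isRegularSeq [IsDomain R] [Ring.KrullDimLE 1 R] {l : List R}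
    (hl : IsParamSeq l) : IsRegularSeq R l := by
  refine ⟨?_, hl.2.1⟩
  match l, hl.length_le_one with
  | [], _ => trivial
  | [a], _ => exact ⟨fun m hm => (mul_eq_zero.mp hm).resolve_left (hl.ne_zero (by simp)), trivial⟩

/-- A one-dimensional integral domain is Cohen-Macaulay: every nonempty parameter sequence
has length exactly `1` and consists of a nonzero nonunit, hence is a regular sequence; in
particular every strong parameter sequence is a regular sequence. -/
theorem stmt_14 {R : Type*} [CommRing R] [IsDomain R] (h1 : ringKrullDim R = 1) :
    (∀ l : List R, IsParamSeq l → l ≠ [] →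
        l.length = 1 ∧ ∀ a ∈ l, a ≠ 0 ∧ ¬ IsUnit a) ∧
    (∀ l : List R, IsStrongParamSeq l → IsRegularSeq R l) := by
  have : Ring.KrullDimLE 1 R := Ring.krullDimLE_iff.mpr h1.le
  refine ⟨fun l hl hne => ⟨?_, fun a ha => ⟨hl.ne_zero ha, hl.not_isUnit ha⟩⟩, fun l hl => ?_⟩
  · have := List.length_pos_iff.mpr hne
    have := hl.length_le_one
    omega
  · simpa using (hl l.length le_rfl).isRegularSeq

end
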